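/- arXiv:1702.01259 — 2 statements merged into one kernel-verified Lean document; each statement's English description precedes it below -/
import Mathlib

section
/- Let f(x) = a_m x^m + a_{m-1}x^{m-1} + ... + a_0 with m ≥ 0 and a_m ≠ 0 be a polynomial solution of f(x)f(x⁻¹) = (q-1)f̃(x) + q (with f̃ as in the Hecke quadratic relation: f̃ A-linear with f̃(xᵏ) = xᵏ + xᵏ⁻¹ + ... + x^{-k} for k ≥ 0). Then a_j = q - 1 for all 0 ≤ j ≤ m-1, and a_m satisfies a_m² = (q-1)a_m + q, i.e., a_m = -1 or a_m = q. -/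
open LaurentPolynomial

noncomputable section

variable (A : Type*) [CommRing A] [IsDomain A]

/-- The monomial values of the operator `f ↦ f̃`:
`x^k ↦ x^k + x^{k-1} + ⋯ + x^{-k}` for `k ≥ 0`, and
`x^k ↦ -(x^{k+1} + ⋯ + x^{-k-1})` for `k < 0`. -/
def tildeMon (k : ℤ) : A[T;T⁻¹] :=
  if 0 ≤ k then ∑ j ∈ Finset.Icc (-k) k, (T j : A[T;T⁻¹])
  else -(∑ j ∈ Finset.Icc (k + 1) (-(k + 1)), (T j : A[T;T⁻¹]))

/-- The `A`-linear operator `f ↦ f̃` determined by its values on monomials. -/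
def tilde (f : A[T;T⁻¹]) : A[T;T⁻¹] :=
  f.coeff.sum fun k a => a • tildeMon A k

/-!
Comparing coefficients of `x^n`, `n ≥ 0`, in `f(x) f(x⁻¹) = (q-1) f̃(x) + q` gives
`∑_{i=n}^{m} a_i a_{i-n} = (q-1) ∑_{i=n}^{m} a_i + δ_{n,0} q`.
For `n = m - j > 0` every term with `i < m` involves some `a_{i-n}` with `i - n < j`; by strong
induction on `j` these equal `q - 1`, and the identity collapses to `a_m (a_j - (q-1)) = 0`.
At `n = 0` the identity then reads `a_m² = (q-1) a_m + q`.
-/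

open Finset

namespace LaurentPolynomial

theorem coeff_mul_invert {R : Type*} [CommRing R] (f g : R[T;T⁻¹]) (n : ℤ) :
    (f * invert g).coeff n = f.coeff.sum fun i a => a * g.coeff (i - n) := by
  simp only [AddMonoidAlgebra.coeff_mul_apply_left, invert_apply, neg_add_eq_sub, neg_sub]

end LaurentPolynomial

section

variable {R : Type*} [CommRing R]

theorem coeff_tildeMon_of_nonneg {k : ℤ} (hk : 0 ≤ k) (n : ℤ) :
    (tildeMon R k).coeff n = if n ∈ Icc (-k) k then 1 else 0 := by
  simp only [tildeMon, if_pos hk, AddMonoidAlgebra.coeff_sum, sum_apply', T_apply,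
    sum_ite_eq']

theorem coeff_tilde_of_support_subset {m : ℤ} {f : R[T;T⁻¹]}
    (hsupp : f.coeff.support ⊆ Icc 0 m) {n : ℤ} (hn : 0 ≤ n) :
    (tilde R f).coeff n = ∑ k ∈ Icc n m, f.coeff k := by
  classical
  rw [tilde, AddMonoidAlgebra.coeff_finsuppSum, Finsupp.sum_apply,
    Finsupp.sum_of_support_subset _ hsupp _ fun _ _ => by simp]
  have hIcc : Icc n m = (Icc 0 m).filter (n ≤ ·) := by
    ext k; simp only [mem_Icc, mem_filter]; omega
  rw [hIcc, sum_filter]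
  refine sum_congr rfl fun k hk => ?_
  have hk0 : 0 ≤ k := (mem_Icc.1 hk).1
  have hnk : n ∈ Icc (-k) k ↔ n ≤ k := by simp only [mem_Icc]; omega
  simp only [AddMonoidAlgebra.coeff_smul_apply, coeff_tildeMon_of_nonneg hk0,
    smul_eq_mul, hnk, mul_ite, mul_one, mul_zero]

theorem sum_coeff_mul_coeff_sub_eq_of_hecke {q : R} {m : ℤ} {f : R[T;T⁻¹]}
    (hsupp : f.coeff.support ⊆ Icc 0 m)
    (hf : f * invert f = (q - 1) • tilde R f + C q) {n : ℤ} (hn : 0 ≤ n) :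
    ∑ i ∈ Icc n m, f.coeff i * f.coeff (i - n)
      = (q - 1) * ∑ i ∈ Icc n m, f.coeff i + if n = 0 then q else 0 := by
  have hcoeff := congrArg (fun g : R[T;T⁻¹] => g.coeff n) hf
  simp only [coeff_mul_invert, AddMonoidAlgebra.coeff_add, Finsupp.add_apply,
    AddMonoidAlgebra.coeff_smul_apply, smul_eq_mul, coeff_tilde_of_support_subset hsupp hn,
    C_apply] at hcoeff
  rw [← hcoeff, Finsupp.sum_of_support_subset _ hsupp _ fun _ _ => by rw [zero_mul]]
  refine sum_subset (Icc_subset_Icc_left hn) fun i hi hin => ?_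
  have hneg : f.coeff (i - n) = 0 := Finsupp.notMem_support_iff.1 fun h => by
    have := mem_Icc.1 (hsupp h); simp only [mem_Icc] at hi hin; omega
  rw [hneg, mul_zero]

variable [NoZeroDivisors R]

theorem eq_sub_one_of_sum_mul_eq {q : R} {m : ℤ} (a : ℤ → R) (ham : a m ≠ 0)
    (h : ∀ n, 0 < n → n ≤ m →
      ∑ i ∈ Icc n m, a i * a (i - n) = (q - 1) * ∑ i ∈ Icc n m, a i)
    {j : ℤ} (hj : 0 ≤ j) (hjm : j < m) : a j = q - 1 := by
  induction j using Int.strongRec (m := 0) with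
  | lt j _ => omega
  | ge j _ ih =>
    have key := h (m - j) (by omega) (by omega)
    rw [sum_Icc_eq_sum_Ico_add _ (by omega), sum_Icc_eq_sum_Ico_add _ (by omega),
      sub_sub_cancel] at key
    have hlow : ∑ i ∈ Ico (m - j) m, a i * a (i - (m - j))
        = (∑ i ∈ Ico (m - j) m, a i) * (q - 1) := by
      rw [sum_mul]
      refine sum_congr rfl fun i hi => ?_
      have := mem_Ico.1 hi
      rw [ih (i - (m - j)) (by omega) (by omega) (by omega)]
    have hfac : a m * (a j - (q - 1)) = 0 := by linear_combination key - hlow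
    exact sub_eq_zero.1 ((mul_eq_zero.1 hfac).resolve_left ham)

theorem eq_neg_one_or_eq_of_sum_mul_self_eq {q : R} {m : ℤ} (a : ℤ → R) (hm : 0 ≤ m)
    (hlow : ∀ j, 0 ≤ j → j < m → a j = q - 1)
    (h : ∑ i ∈ Icc 0 m, a i * a i = (q - 1) * ∑ i ∈ Icc 0 m, a i + q) :
    a m = -1 ∨ a m = q := by
  have hconst : ∀ i ∈ Ico 0 m, a i = q - 1 := fun i hi =>
    hlow i (mem_Ico.1 hi).1 (mem_Ico.1 hi).2
  rw [sum_Icc_eq_sum_Ico_add _ hm, sum_Icc_eq_sum_Ico_add _ hm,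
    sum_congr rfl fun i hi => by rw [hconst i hi], sum_congr rfl hconst,
    sum_const, sum_const] at h
  have hfac : (a m + 1) * (a m - q) = 0 := by linear_combination h
  rcases mul_eq_zero.1 hfac with hneg | hq
  · exact Or.inl (eq_neg_of_add_eq_zero_left hneg)
  · exact Or.inr (sub_eq_zero.1 hq)

end

/-- if `f(x) = a_m x^m + ⋯ + a_0` (a polynomial of degree `m ≥ 0`,
viewed as a Laurent polynomial supported in `[0, m]`, with leading coefficient
`a_m ≠ 0`) solves `f(x)f(x⁻¹) = (q-1)f̃(x) + q`, then `a_j = q - 1` for all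
`0 ≤ j ≤ m - 1` and `a_m = -1` or `a_m = q`. -/
theorem coefficients_of_polynomial_hecke_solution (q : A) (m : ℕ) (f : A[T;T⁻¹])
    (hsupp : f.coeff.support ⊆ Finset.Icc (0 : ℤ) (m : ℤ))
    (hlead : f.coeff (m : ℤ) ≠ 0)
    (hf : f * (LaurentPolynomial.invert f) = (q - 1) • tilde A f + C q) :
    (∀ j : ℤ, 0 ≤ j → j < (m : ℤ) → f.coeff j = q - 1) ∧ (f.coeff (m : ℤ) = -1 ∨ f.coeff (m : ℤ) = q) := by
  have hlow : ∀ j : ℤ, 0 ≤ j → j < (m : ℤ) → f.coeff j = q - 1 := fun j hj hjm =>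
    eq_sub_one_of_sum_mul_eq f.coeff hlead (fun n hn _ => by
      simpa only [hn.ne', if_false, add_zero] using
        sum_coeff_mul_coeff_sub_eq_of_hecke hsupp hf hn.le) hj hjm
  refine ⟨hlow, eq_neg_one_or_eq_of_sum_mul_self_eq f.coeff m.cast_nonneg hlow ?_⟩
  simpa only [sub_zero, if_true] using sum_coeff_mul_coeff_sub_eq_of_hecke hsupp hf le_rfl

end
end

section
/- Let p, κ ∈ ℂ and for 1 ≤ k ≤ n define the Jucys–Murphy-type elements JM_k = -p(s_{1,k} + s_{2,k} + ... + s_{k-1,k}) + κ in the group algebra ℂ[S_n] (with JM₁ = κ), where s_{j,k} denotes the transposition (j k). Then the assignment ε_k ↦ JM_k, t_w ↦ w defines a unital algebra homomorphism from the graded affine Hecke algebra ℍ_n of type GL_n with parameter p (generated by ℂ[S_n] and the polynomial algebra S(V_n) with V_n = span(ε₁,...,ε_n), subject to v·t_{s_α} - t_{s_α}·s_α(v) = p⟨v, α^∨⟩ for simple roots α) to ℂ[S_n]. -/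
noncomputable section

open Finset

/-- The simple transposition `s_j = (j, j+1)` in `S_n`. -/
def sj {n : ℕ} (j : ℕ) (hj : j + 1 < n) : Equiv.Perm (Fin n) :=
  Equiv.swap ⟨j, Nat.lt_of_succ_lt hj⟩ ⟨j + 1, hj⟩

/-- Generators of the graded affine Hecke algebra `ℍ_n` of type `GL_n`:
the basis vectors `ε_k` of `V_n` (left) and the group elements `t_w`,
`w ∈ S_n` (right). -/
abbrev GHGen (n : ℕ) := Fin n ⊕ Equiv.Perm (Fin n)

/-- The pairing `⟨ε_k, α_j^∨⟩` for the simple coroot `α_j^∨ = ε_j - ε_{j+1}`. -/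
def pairing {n : ℕ} (j : ℕ) (hj : j + 1 < n) (k : Fin n) : ℂ :=
  (if k = (⟨j, Nat.lt_of_succ_lt hj⟩ : Fin n) then 1 else 0) -
    (if k = (⟨j + 1, hj⟩ : Fin n) then 1 else 0)

/-- The defining relations of the graded affine Hecke algebra
`ℍ_n = ℍ(V_n, R_n, Δ_n, p)` of type `A_{n-1}`: `w ↦ t_w` is multiplicative
(an algebra embedding of `ℂ[S_n]`), the `ε_k` pairwise commute (an algebra
embedding of `S(V_n)`), and the cross relation
`v·t_{s_j} - t_{s_j}·s_j(v) = p·⟨v, α_j^∨⟩` holds. -/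
inductive GradedRel (n : ℕ) (p : ℂ) :
    FreeAlgebra ℂ (GHGen n) → FreeAlgebra ℂ (GHGen n) → Prop
  | group_mul (w w' : Equiv.Perm (Fin n)) :
      GradedRel n p
        (FreeAlgebra.ι ℂ (Sum.inr w) * FreeAlgebra.ι ℂ (Sum.inr w'))
        (FreeAlgebra.ι ℂ (Sum.inr (w * w')))
  | group_one : GradedRel n p (FreeAlgebra.ι ℂ (Sum.inr (1 : Equiv.Perm (Fin n)))) 1
  | poly_comm (k l : Fin n) :
      GradedRel n p
        (FreeAlgebra.ι ℂ (Sum.inl k) * FreeAlgebra.ι ℂ (Sum.inl l))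
        (FreeAlgebra.ι ℂ (Sum.inl l) * FreeAlgebra.ι ℂ (Sum.inl k))
  | cross (j : ℕ) (hj : j + 1 < n) (k : Fin n) :
      GradedRel n p
        (FreeAlgebra.ι ℂ (Sum.inl k) * FreeAlgebra.ι ℂ (Sum.inr (sj j hj)) -
          FreeAlgebra.ι ℂ (Sum.inr (sj j hj)) * FreeAlgebra.ι ℂ (Sum.inl ((sj j hj) k)))
        ((p * pairing j hj k) • 1)

/-- The graded affine Hecke algebra `ℍ_n` with parameter `p`, by generators
and relations. -/
abbrev GradedHecke (n : ℕ) (p : ℂ) := RingQuot (GradedRel n p)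

/-- The Jucys–Murphy-type element
`JM_k = -p(s_{1,k} + ⋯ + s_{k-1,k}) + κ ∈ ℂ[S_n]` (with `JM_1 = κ`). -/
def JM {n : ℕ} (p κ : ℂ) (k : Fin n) : MonoidAlgebra ℂ (Equiv.Perm (Fin n)) :=
  κ • 1 - p • ∑ j ∈ Finset.univ.filter (· < k),
    MonoidAlgebra.of ℂ (Equiv.Perm (Fin n)) (Equiv.swap j k)

/-!
Write `JM_k = κ - p • X_k`, where `X_k = ∑_{j < k} (j k)` is the classical Jucys–Murphy
element. The relations of `ℍ_n` reduce to two facts about the `X_k`. They commute: for `l < k`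
every transposition `(m l)` occurring in `X_l` fixes `k` and permutes `{m | m < k}`, so it
commutes with `X_k`. And they satisfy the recursion `X_{j+1} = s_j X_j s_j + s_j`, which gives
`s_j X_{s_j k} - X_k s_j = ⟨ε_k, α_j^∨⟩` and hence the cross relation.
-/

open Equiv

section JucysMurphy

variable {α : Type*} [Fintype α] [LinearOrder α]

section Semiring

variable (R : Type*) [Semiring R]

def jucysMurphy (k : α) : MonoidAlgebra R (Perm α) :=
  ∑ j ∈ univ.filter (· < k), MonoidAlgebra.of R (Perm α) (swap j k)

variable {R}

theorem of_mul_jucysMurphy_mul_of_inv (σ : Perm α) (k : α) :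
    MonoidAlgebra.of R (Perm α) σ * jucysMurphy R k * MonoidAlgebra.of R (Perm α) σ⁻¹ =
      ∑ j ∈ univ.filter (· < k), MonoidAlgebra.of R (Perm α) (swap (σ j) (σ k)) := by
  simp only [jucysMurphy, mul_sum, sum_mul, ← map_mul, swap_apply_apply]

theorem commute_of_jucysMurphy {σ : Perm α} {k : α} (hk : σ k = k)
    (hσ : ∀ m, σ m < k ↔ m < k) :
    Commute (MonoidAlgebra.of R (Perm α) σ) (jucysMurphy R k) := by
  have hconj : MonoidAlgebra.of R (Perm α) σ * jucysMurphy R k *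
      MonoidAlgebra.of R (Perm α) σ⁻¹ = jucysMurphy R k := by
    rw [of_mul_jucysMurphy_mul_of_inv, hk]
    exact sum_equiv σ (fun m => by simp only [mem_filter, mem_univ, true_and, hσ]) fun _ _ => rfl
  calc MonoidAlgebra.of R (Perm α) σ * jucysMurphy R k
      = MonoidAlgebra.of R (Perm α) σ * jucysMurphy R k *
          (MonoidAlgebra.of R (Perm α) σ⁻¹ * MonoidAlgebra.of R (Perm α) σ) := by
        rw [← map_mul, inv_mul_cancel, map_one, mul_one]
    _ = jucysMurphy R k * MonoidAlgebra.of R (Perm α) σ := by rw [← mul_assoc, hconj]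

theorem jucysMurphy_commute (k l : α) : Commute (jucysMurphy R k) (jucysMurphy R l) := by
  wlog hlk : l < k generalizing k l
  · rcases (not_lt.1 hlk).eq_or_lt with rfl | hkl
    · exact Commute.refl _
    · exact (this l k hkl).symm
  rw [jucysMurphy.eq_1 R l]
  refine Commute.sum_right _ _ _ fun m hm => ?_
  have hml : m < l := (mem_filter.1 hm).2
  refine (commute_of_jucysMurphy (swap_apply_of_ne_of_ne (hml.trans hlk).ne' hlk.ne')
    fun x => ?_).symm
  rcases eq_or_ne x m with rfl | hxm
  · simp [hml.trans hlk, hlk]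
  rcases eq_or_ne x l with rfl | hxl
  · simp [hml.trans hlk, hlk]
  · rw [swap_apply_of_ne_of_ne hxm hxl]

theorem jucysMurphy_eq_of_covBy {a b : α} (hab : a ⋖ b) :
    jucysMurphy R b =
      MonoidAlgebra.of R (Perm α) (swap a b) * jucysMurphy R a *
        MonoidAlgebra.of R (Perm α) (swap a b) + MonoidAlgebra.of R (Perm α) (swap a b) := by
  have hIio : univ.filter (· < b) = insert a (univ.filter (· < a)) := by
    ext m
    simp only [mem_filter, mem_univ, true_and, mem_insert, hab.lt_iff_le_left, le_iff_eq_or_lt]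
  have hfix : ∀ m ∈ univ.filter (· < a), swap a b m = m := fun m hm =>
    have hma : m < a := (mem_filter.1 hm).2
    swap_apply_of_ne_of_ne hma.ne (hma.trans hab.lt).ne
  nth_rw 2 [← swap_inv a b]
  rw [of_mul_jucysMurphy_mul_of_inv, swap_apply_left, jucysMurphy,
    hIio, sum_insert (by simp), add_comm]
  exact congrArg (· + _) (sum_congr rfl fun m hm => by rw [hfix m hm])

end Semiring

variable {R : Type*} [Ring R]

theorem of_swap_mul_jucysMurphy_sub {a b : α} (hab : a ⋖ b) (k : α) :
    MonoidAlgebra.of R (Perm α) (swap a b) * jucysMurphy R (swap a b k) -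
        jucysMurphy R k * MonoidAlgebra.of R (Perm α) (swap a b) =
      ((if k = a then 1 else 0) - (if k = b then 1 else 0) : R) • 1 := by
  have hrec := jucysMurphy_eq_of_covBy (R := R) hab
  set s := MonoidAlgebra.of R (Perm α) (swap a b)
  have hss : s * s = 1 := by rw [← map_mul, swap_mul_self, map_one]
  rcases eq_or_ne k a with rfl | hka
  · rw [swap_apply_left, hrec, if_pos rfl, if_neg hab.lt.ne, sub_zero, one_smul]
    simp only [mul_add, ← mul_assoc, hss, one_mul]
    abel
  rcases eq_or_ne k b with rfl | hkb
  · rw [swap_apply_right, hrec, if_pos rfl, if_neg hab.lt.ne', zero_sub, neg_smul, one_smul]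
    simp only [add_mul, mul_assoc, hss, mul_one]
    abel
  · have hab_lt : a < k ↔ b < k :=
      ⟨fun h => (hab.ge_of_gt h).lt_of_ne hkb.symm, hab.lt.trans⟩
    have hlt : ∀ m, swap a b m < k ↔ m < k := fun m => by
      rcases eq_or_ne m a with rfl | hma
      · rw [swap_apply_left, hab_lt]
      rcases eq_or_ne m b with rfl | hmb
      · rw [swap_apply_right, hab_lt]
      · rw [swap_apply_of_ne_of_ne hma hmb]
    rw [swap_apply_of_ne_of_ne hka hkb, if_neg hka, if_neg hkb, sub_self, zero_smul,
      (commute_of_jucysMurphy (swap_apply_of_ne_of_ne hka hkb) hlt).eq, sub_self]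

end JucysMurphy

theorem Fin.mk_covBy_mk_succ {n : ℕ} (j : ℕ) (hj : j + 1 < n) :
    (⟨j, Nat.lt_of_succ_lt hj⟩ : Fin n) ⋖ ⟨j + 1, hj⟩ :=
  ⟨Fin.mk_lt_mk.2 j.lt_succ_self, fun c h₁ h₂ => by
    simp only [Fin.lt_def] at h₁ h₂
    omega⟩

section JM

variable {n : ℕ} (p κ : ℂ)

theorem JM_eq (k : Fin n) : JM p κ k = κ • 1 - p • jucysMurphy ℂ k := rfl

theorem JM_commute (k l : Fin n) : Commute (JM p κ k) (JM p κ l) := by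
  rw [JM_eq, JM_eq]
  have hκ : ∀ x, Commute (κ • 1 : MonoidAlgebra ℂ (Perm (Fin n))) x :=
    fun x => (Commute.one_left x).smul_left κ
  exact ((hκ _).sub_right (hκ _)).sub_left
    ((hκ _).symm.sub_right (((jucysMurphy_commute k l).smul_left p).smul_right p))

theorem JM_mul_sj_sub (j : ℕ) (hj : j + 1 < n) (k : Fin n) :
    JM p κ k * MonoidAlgebra.of ℂ _ (sj j hj) -
        MonoidAlgebra.of ℂ _ (sj j hj) * JM p κ (sj j hj k) =
      (p * pairing j hj k) • 1 := by
  rw [JM_eq, JM_eq, mul_smul, pairing, sj,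
    ← of_swap_mul_jucysMurphy_sub (Fin.mk_covBy_mk_succ j hj)]
  simp only [sub_mul, mul_sub, smul_mul_assoc, mul_smul_comm, one_mul, mul_one, smul_sub]
  abel

end JM

/-- the assignment `ε_k ↦ JM_k`, `t_w ↦ w` defines a unital
`ℂ`-algebra homomorphism from the graded affine Hecke algebra `ℍ_n` of type
`GL_n` with parameter `p` to the group algebra `ℂ[S_n]`. -/
theorem jucysMurphy_algHom (n : ℕ) (p κ : ℂ) :
    ∃ φ : GradedHecke n p →ₐ[ℂ] MonoidAlgebra ℂ (Equiv.Perm (Fin n)),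
      (∀ k : Fin n,
        φ (RingQuot.mkAlgHom ℂ (GradedRel n p) (FreeAlgebra.ι ℂ (Sum.inl k))) =
          JM p κ k) ∧
      (∀ w : Equiv.Perm (Fin n),
        φ (RingQuot.mkAlgHom ℂ (GradedRel n p) (FreeAlgebra.ι ℂ (Sum.inr w))) =
          MonoidAlgebra.of ℂ (Equiv.Perm (Fin n)) w) := by
  let F := FreeAlgebra.lift ℂ (Sum.elim (JM p κ) (MonoidAlgebra.of ℂ (Equiv.Perm (Fin n))))
  have hF : ∀ ⦃x y⦄, GradedRel n p x y → F x = F y := by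
    rintro _ _ (⟨w, w'⟩ | _ | ⟨k, l⟩ | ⟨j, hj, k⟩) <;>
      simp only [F, map_mul, map_sub, map_smul, map_one, FreeAlgebra.lift_ι_apply, Sum.elim_inl,
        Sum.elim_inr]
    · exact JM_commute p κ k l
    · exact JM_mul_sj_sub p κ j hj k
  refine ⟨RingQuot.liftAlgHom ℂ ⟨F, hF⟩, fun k => ?_, fun w => ?_⟩ <;>
    simp only [RingQuot.liftAlgHom_mkAlgHom_apply, F, FreeAlgebra.lift_ι_apply, Sum.elim_inl,
      Sum.elim_inr]
end
end
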